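/- Let X be a Banach space, let T = {T(t,s) : t, s > a₀} be an invertible evolution family on X exhibiting bounded growth on [a₀*,∞) with constants K, μ > 0 (so ‖T(t,s)‖ ≤ K e^{μ(t−s)} for t ≥ s ≥ a₀*), and suppose T is uniformly noncritical on [a₀*,∞) with constants θ ∈ (0,1) and C > 0. For s ≥ a₀* let S(s) := { v ∈ X : sup_{t ≥ s} ‖T(t,s)v‖ < ∞ }. Then setting D := K e^{μC}, one has ‖T(t,s)v‖ ≤ D ‖v‖ for all t ≥ s ≥ a₀* and all v ∈ S(s); in particular, sup_{t ≥ s} ‖T(t,s)v‖ = sup_{t ∈ [s, s+C]} ‖T(t,s)v‖ for v ∈ S(s). -/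

import Mathlib

open Set Real

noncomputable section

variable {X : Type*} [NormedAddCommGroup X] [NormedSpace ℝ X] [CompleteSpace X]

/-- An invertible evolution family on `X` with parameter `a₀ ∈ ℝ ∪ {-∞}` (modelled as
`EReal`), viewed as a two-parameter family `T t s` for all `t, s > a₀` (for `t < s`,
`T t s` is the inverse of `T s t`): `T t t = Id` for `t > a₀`; the two-sided cocycle
identity `T t s ∘ T s r = T t r` holds for all `t, s, r > a₀`; and for every `s > a₀`
and `v ∈ X`, the map `t ↦ T t s v` is continuous on `[s, ∞)`. -/
def IsInvertibleEvolutionFamily (a₀ : EReal) (T : ℝ → ℝ → X →L[ℝ] X) : Prop :=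
  (∀ t : ℝ, a₀ < (t : EReal) → T t t = ContinuousLinearMap.id ℝ X) ∧
  (∀ t s r : ℝ, a₀ < (t : EReal) → a₀ < (s : EReal) → a₀ < (r : EReal) →
    (T t s).comp (T s r) = T t r) ∧
  (∀ s : ℝ, a₀ < (s : EReal) → ∀ v : X, ContinuousOn (fun t => T t s v) (Set.Ici s))

/-- The stable set at time `s`: vectors with bounded forward orbit,
`S(s) = {v ∈ X : sup_{t ≥ s} ‖T t s v‖ < ∞}`. -/
def stableSet (T : ℝ → ℝ → X →L[ℝ] X) (s : ℝ) : Set X :=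
  {v : X | ∃ M : ℝ, ∀ t : ℝ, s ≤ t → ‖T t s v‖ ≤ M}

/-! Let `B = sup_{t ≥ s} ‖T t s v‖ < ∞`. For `t ≥ s + C` the whole window `[t - C, t + C]`
lies in the forward orbit, so noncriticality gives `‖T t s v‖ ≤ θ B`. As `θ < 1`, the supremum
is therefore attained on `[s, s + C]`, where bounded growth bounds the orbit by
`K e^{μ C} ‖v‖`. -/

theorem csSup_image_eq_of_le_mul_csSup {α : Type*} {f : α → ℝ} {s t : Set α} {θ : ℝ}
    (hst : s ⊆ t) (hs : s.Nonempty) (hbdd : BddAbove (f '' t)) (hf : ∀ x ∈ s, 0 ≤ f x)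
    (hθ : θ < 1) (hout : ∀ x ∈ t \ s, f x ≤ θ * sSup (f '' t)) :
    sSup (f '' t) = sSup (f '' s) := by
  have hbdd_s : BddAbove (f '' s) := hbdd.mono (image_mono hst)
  obtain ⟨x₀, hx₀⟩ := hs
  have hsup_nonneg : 0 ≤ sSup (f '' s) := (hf x₀ hx₀).trans (le_csSup hbdd_s (mem_image_of_mem f hx₀))
  have hmax : sSup (f '' t) ≤ max (sSup (f '' s)) (θ * sSup (f '' t)) := by
    refine csSup_le ((Set.Nonempty.image f ⟨x₀, hx₀⟩).mono (image_mono hst)) ?_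
    rintro _ ⟨x, hx, rfl⟩
    by_cases hxs : x ∈ s
    · exact le_max_of_le_left (le_csSup hbdd_s (mem_image_of_mem f hxs))
    · exact le_max_of_le_right (hout x ⟨hx, hxs⟩)
  refine le_antisymm ?_ (csSup_le_csSup hbdd ⟨_, mem_image_of_mem f hx₀⟩ (image_mono hst))
  rcases le_max_iff.mp hmax with h | h
  · exact h
  · nlinarith

section EvolutionFamily

variable {E : Type*} [NormedAddCommGroup E] [NormedSpace ℝ E] {a₀ : EReal}
  {T : ℝ → ℝ → E →L[ℝ] E} {astar K μ θ C s t : ℝ} {v : E}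

def HasBoundedGrowthOn (T : ℝ → ℝ → E →L[ℝ] E) (astar K μ : ℝ) : Prop :=
  ∀ t : ℝ, astar ≤ t → ∀ s : ℝ, astar ≤ s → s ≤ t → ‖T t s‖ ≤ K * Real.exp (μ * (t - s))

/-- The constant `M` quantified over stands for `sup_{|u - t| ≤ C} ‖T u t v‖`, so that no
supremum of a possibly unbounded set is taken. -/
def IsUniformlyNoncriticalOn (a₀ : EReal) (T : ℝ → ℝ → E →L[ℝ] E) (astar θ C : ℝ) : Prop :=
  ∀ (v : E) (t : ℝ), astar + C ≤ t →
    ∀ M : ℝ, (∀ u : ℝ, a₀ < (u : EReal) → |u - t| ≤ C → ‖T u t v‖ ≤ M) → ‖v‖ ≤ θ * M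

theorem IsInvertibleEvolutionFamily.apply_apply (hT : IsInvertibleEvolutionFamily a₀ T)
    {u : ℝ} (hu : a₀ < (u : EReal)) (ht : a₀ < (t : EReal)) (hs : a₀ < (s : EReal)) (v : E) :
    T u t (T t s v) = T u s v := by
  rw [← ContinuousLinearMap.comp_apply, hT.2.1 u t s hu ht hs]

theorem bddAbove_orbit_of_mem_stableSet (hv : v ∈ stableSet T s) :
    BddAbove ((fun t => ‖T t s v‖) '' Ici s) := by
  obtain ⟨M, hM⟩ := hv
  exact ⟨M, forall_mem_image.2 hM⟩

theorem IsUniformlyNoncriticalOn.norm_apply_le_mul_csSup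
    (hnc : IsUniformlyNoncriticalOn a₀ T astar θ C) (hT : IsInvertibleEvolutionFamily a₀ T)
    (hastar : a₀ < (astar : EReal)) (hs : astar ≤ s) (hv : v ∈ stableSet T s)
    (ht : s + C ≤ t) : ‖T t s v‖ ≤ θ * sSup ((fun t => ‖T t s v‖) '' Ici s) := by
  have hpast : ∀ x : ℝ, astar ≤ x → a₀ < (x : EReal) := fun x hx =>
    hastar.trans_le (EReal.coe_le_coe_iff.2 hx)
  refine hnc (T t s v) t (by linarith) _ fun u hu hut => ?_
  have hsu : s ≤ u := by linarith [(abs_le.mp hut).1]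
  rw [hT.apply_apply hu (hpast t (by linarith [abs_nonneg (u - t)])) (hpast s hs)]
  exact le_csSup (bddAbove_orbit_of_mem_stableSet hv) (mem_image_of_mem _ hsu)

theorem csSup_orbit_Ici_eq_csSup_orbit_Icc (hnc : IsUniformlyNoncriticalOn a₀ T astar θ C)
    (hT : IsInvertibleEvolutionFamily a₀ T) (hastar : a₀ < (astar : EReal)) (hθ : θ < 1)
    (hC : 0 ≤ C) (hs : astar ≤ s) (hv : v ∈ stableSet T s) :
    sSup ((fun t => ‖T t s v‖) '' Ici s) = sSup ((fun t => ‖T t s v‖) '' Icc s (s + C)) :=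
  csSup_image_eq_of_le_mul_csSup Icc_subset_Ici_self ⟨s, left_mem_Icc.2 (by linarith)⟩
    (bddAbove_orbit_of_mem_stableSet hv) (fun _ _ => norm_nonneg _) hθ
    fun _ ⟨hst, htC⟩ => hnc.norm_apply_le_mul_csSup hT hastar hs hv
      (not_le.1 fun h => htC ⟨hst, h⟩).le

theorem HasBoundedGrowthOn.norm_apply_le (hg : HasBoundedGrowthOn T astar K μ) (hK : 0 ≤ K)
    (hμ : 0 ≤ μ) (hs : astar ≤ s) (hst : s ≤ t) (htC : t ≤ s + C) (v : E) :
    ‖T t s v‖ ≤ K * Real.exp (μ * C) * ‖v‖ := by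
  have hexp : Real.exp (μ * (t - s)) ≤ Real.exp (μ * C) :=
    Real.exp_le_exp.2 (mul_le_mul_of_nonneg_left (by linarith) hμ)
  calc ‖T t s v‖ ≤ ‖T t s‖ * ‖v‖ := (T t s).le_opNorm v
    _ ≤ K * Real.exp (μ * (t - s)) * ‖v‖ := by gcongr; exact hg t (hs.trans hst) s hs hst
    _ ≤ K * Real.exp (μ * C) * ‖v‖ := by gcongr

end EvolutionFamily

theorem unifNoncritical_boundedGrowth_uniform_bound_on_stableSet_general
    (a₀ : EReal) (T : ℝ → ℝ → X →L[ℝ] X) (astar : ℝ) (K μ θ C : ℝ)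
    (hT : IsInvertibleEvolutionFamily a₀ T)
    (hastar : a₀ < (astar : EReal))
    (hK : 0 < K) (hμ : 0 < μ)
    (hgrowth : ∀ t : ℝ, astar ≤ t → ∀ s : ℝ, astar ≤ s → s ≤ t →
      ‖T t s‖ ≤ K * Real.exp (μ * (t - s)))
    (hθ1 : θ < 1) (hC : 0 < C)
    (hnc : ∀ (v : X) (t : ℝ), astar + C ≤ t →
      ∀ M : ℝ, (∀ u : ℝ, a₀ < (u : EReal) → |u - t| ≤ C → ‖T u t v‖ ≤ M) → ‖v‖ ≤ θ * M) :
    (∀ (t s : ℝ) (v : X), astar ≤ s → s ≤ t → v ∈ stableSet T s →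
      ‖T t s v‖ ≤ K * Real.exp (μ * C) * ‖v‖) ∧
    (∀ (s : ℝ) (v : X), astar ≤ s → v ∈ stableSet T s →
      sSup ((fun t => ‖T t s v‖) '' Set.Ici s) =
        sSup ((fun t => ‖T t s v‖) '' Set.Icc s (s + C))) := by
  refine ⟨fun t s v hs hst hv => ?_, fun s v hs hv =>
    csSup_orbit_Ici_eq_csSup_orbit_Icc hnc hT hastar hθ1 hC.le hs hv⟩
  calc ‖T t s v‖ ≤ sSup ((fun t => ‖T t s v‖) '' Ici s) :=
        le_csSup (bddAbove_orbit_of_mem_stableSet hv) (mem_image_of_mem _ hst)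
    _ = sSup ((fun t => ‖T t s v‖) '' Icc s (s + C)) :=
        csSup_orbit_Ici_eq_csSup_orbit_Icc hnc hT hastar hθ1 hC.le hs hv
    _ ≤ K * Real.exp (μ * C) * ‖v‖ :=
        csSup_le ((nonempty_Icc.2 (by linarith)).image _) <| forall_mem_image.2
          fun _ ⟨h₁, h₂⟩ => HasBoundedGrowthOn.norm_apply_le hgrowth hK.le hμ.le hs h₁ h₂ v

/-- Let `T` be an invertible evolution family with bounded growth on
`[a₀*, ∞)` with constants `K, μ > 0`, and uniformly noncritical on `[a₀*, ∞)` with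
constants `θ ∈ (0,1)` and `C > 0`. Then with `D := K e^{μ C}` one has
`‖T t s v‖ ≤ D ‖v‖` for all `t ≥ s ≥ a₀*` and `v ∈ S(s)`; in particular,
`sup_{t ≥ s} ‖T t s v‖ = sup_{t ∈ [s, s+C]} ‖T t s v‖` for `v ∈ S(s)`. -/
theorem unifNoncritical_boundedGrowth_uniform_bound_on_stableSet
    (a₀ : EReal) (T : ℝ → ℝ → X →L[ℝ] X) (astar : ℝ) (K μ θ C : ℝ)
    (hT : IsInvertibleEvolutionFamily a₀ T)
    (hastar : a₀ < (astar : EReal))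
    (hK : 0 < K) (hμ : 0 < μ)
    (hgrowth : ∀ t : ℝ, astar ≤ t → ∀ s : ℝ, astar ≤ s → s ≤ t →
      ‖T t s‖ ≤ K * Real.exp (μ * (t - s)))
    (hθ : 0 < θ) (hθ1 : θ < 1) (hC : 0 < C)
    (hnc : ∀ (v : X) (t : ℝ), astar + C ≤ t →
      ∀ M : ℝ, (∀ u : ℝ, a₀ < (u : EReal) → |u - t| ≤ C → ‖T u t v‖ ≤ M) → ‖v‖ ≤ θ * M) :
    (∀ (t s : ℝ) (v : X), astar ≤ s → s ≤ t → v ∈ stableSet T s →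
      ‖T t s v‖ ≤ K * Real.exp (μ * C) * ‖v‖) ∧
    (∀ (s : ℝ) (v : X), astar ≤ s → v ∈ stableSet T s →
      sSup ((fun t => ‖T t s v‖) '' Set.Ici s) =
        sSup ((fun t => ‖T t s v‖) '' Set.Icc s (s + C))) :=
  unifNoncritical_boundedGrowth_uniform_bound_on_stableSet_general a₀ T astar K μ θ C hT hastar hK
    hμ hgrowth hθ1 hC hnc
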